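/- The generalized hypergeometric series ₃F₂(1, 3/2, 3; 21/8, 25/8; 1) equals (221/4096)·( 8 + 27·2^{1/4}·π + 54·2^{1/4}·arcoth(2^{1/4}) − 54·2^{1/4}·arctan(2^{1/4}) ). -/

import Mathlib

open Real

noncomputable def poch (a : ℝ) (n : ℕ) : ℝ := Polynomial.eval a (ascPochhammer ℝ n)

noncomputable def arcoth (x : ℝ) : ℝ := (1/2) * Real.log ((x + 1)/(x - 1))

/-! By the recurrence `(4b + 17) I(b+1) = (4b + 4) I(b)` of the beta integral
`I(b) = ∫₀¹ u¹² (1 - u⁴)ᵇ du`, applied twice, `(221/4) C(n+2, 2) I(2n+1)` has the same term ratio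
and initial value as the series, so it is the `n`-th term. Summing under the integral with
`∑ C(n+2, 2) xⁿ = (1 - x)⁻³` at `x = (1 - u⁴)²` leaves `(221/4) ∫₀¹ (1 - u⁴)/(2 - u⁴)³ du`, and the
partial fractions of this rational integrand over `u⁴ - 2` produce `arctan` and `artanh` of
`u / 2^{1/4}`. -/

open MeasureTheory intervalIntegral Set
open scoped Interval

lemma poch_zero (a : ℝ) : poch a 0 = 1 := by simp [poch]

lemma poch_succ (a : ℝ) (n : ℕ) : poch a (n + 1) = poch a n * (a + n) := by
  simp [poch, ascPochhammer_succ_right]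

noncomputable def term3F2 (a₁ a₂ a₃ b₁ b₂ : ℝ) (n : ℕ) : ℝ :=
  poch a₁ n * poch a₂ n * poch a₃ n / (poch b₁ n * poch b₂ n * n.factorial)

lemma term3F2_zero (a₁ a₂ a₃ b₁ b₂ : ℝ) : term3F2 a₁ a₂ a₃ b₁ b₂ 0 = 1 := by
  simp [term3F2, poch_zero]

lemma term3F2_succ (a₁ a₂ a₃ b₁ b₂ : ℝ) (n : ℕ) :
    term3F2 a₁ a₂ a₃ b₁ b₂ (n + 1) = term3F2 a₁ a₂ a₃ b₁ b₂ n *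
      ((a₁ + n) * (a₂ + n) * (a₃ + n) / ((b₁ + n) * (b₂ + n) * (n + 1))) := by
  simp only [term3F2, poch_succ, Nat.factorial_succ, Nat.cast_mul, Nat.cast_succ, div_mul_div_comm]
  ring

noncomputable def betaPowIntegral (m k b : ℕ) : ℝ := ∫ u in (0:ℝ)..1, u ^ m * (1 - u ^ k) ^ b

lemma betaPowIntegral_zero (m k : ℕ) : betaPowIntegral m k 0 = 1 / (m + 1) := by
  simp [betaPowIntegral, integral_pow]

lemma hasDerivAt_pow_mul_one_sub_pow (m k b : ℕ) (u : ℝ) :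
    HasDerivAt (fun v : ℝ => v ^ (m + 1) * (1 - v ^ k) ^ (b + 1))
      ((m + 1 + k * (b + 1)) * (u ^ m * (1 - u ^ k) ^ (b + 1))
        - k * (b + 1) * (u ^ m * (1 - u ^ k) ^ b)) u := by
  have h := (hasDerivAt_pow (m + 1) u).mul (((hasDerivAt_pow k u).const_sub 1).fun_pow (b + 1))
  refine h.congr_deriv ?_
  rcases k with _ | k
  · simp
  · push_cast
    ring

lemma betaPowIntegral_succ (m k b : ℕ) :
    (m + 1 + k * (b + 1)) * betaPowIntegral m k (b + 1) = k * (b + 1) * betaPowIntegral m k b := by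
  have hint : ∀ j, IntervalIntegrable (fun u : ℝ => u ^ m * (1 - u ^ k) ^ j) volume 0 1 :=
    fun j => (by fun_prop : Continuous _).intervalIntegrable 0 1
  have hftc := integral_eq_sub_of_hasDerivAt
    (fun u _ => hasDerivAt_pow_mul_one_sub_pow m k b u)
    (((hint _).const_mul _).sub ((hint _).const_mul _))
  rw [integral_sub ((hint _).const_mul _) ((hint _).const_mul _), intervalIntegral.integral_const_mul,
    intervalIntegral.integral_const_mul] at hftc
  unfold betaPowIntegral
  simp only [one_pow, sub_self, zero_pow (Nat.succ_ne_zero _), mul_zero, zero_mul] at hftc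
  linarith

lemma betaPowIntegral_twelve_four_one : betaPowIntegral 12 4 1 = 4 / 221 := by
  have h := betaPowIntegral_succ 12 4 0
  rw [betaPowIntegral_zero] at h
  norm_num at h
  linarith

lemma betaPowIntegral_twelve_four_add_two (n : ℕ) :
    betaPowIntegral 12 4 (2 * n + 3) =
      betaPowIntegral 12 4 (2 * n + 1) * ((8 * n + 8) * (8 * n + 12) / ((8 * n + 21) * (8 * n + 25))) := by
  have h₁ := betaPowIntegral_succ 12 4 (2 * n + 1)
  have h₂ := betaPowIntegral_succ 12 4 (2 * n + 2)
  push_cast at h₁ h₂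
  field_simp
  linear_combination (8 * (n : ℝ) + 21) * h₂ + (8 * n + 12) * h₁

lemma term3F2_eq_betaPowIntegral (n : ℕ) :
    term3F2 1 (3/2) 3 (21/8) (25/8) n = 221 / 4 * (n + 2).choose 2 * betaPowIntegral 12 4 (2 * n + 1) := by
  induction n with
  | zero => simp [term3F2_zero, betaPowIntegral_twelve_four_one]
  | succ n ih =>
    rw [term3F2_succ, ih, show 2 * (n + 1) + 1 = 2 * n + 3 by ring, betaPowIntegral_twelve_four_add_two]
    simp only [Nat.cast_choose_two]
    push_cast
    field_simp
    ring

theorem hasSum_intervalIntegral_of_nonneg {ι : Type*} [Countable ι] {μ : Measure ℝ}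
    {F : ι → ℝ → ℝ} {f : ℝ → ℝ} {a b : ℝ}
    (hF_meas : ∀ n, AEStronglyMeasurable (F n) (μ.restrict (Ι a b)))
    (hF_nonneg : ∀ n, ∀ t ∈ Ι a b, 0 ≤ F n t) (hf : IntervalIntegrable f μ a b)
    (h_lim : ∀ t ∈ Ι a b, HasSum (fun n => F n t) (f t)) :
    HasSum (fun n => ∫ t in a..b, F n t ∂μ) (∫ t in a..b, f t ∂μ) := by
  refine hasSum_integral_of_dominated_convergence F hF_meas
    (fun n => ae_of_all _ fun t ht => (Real.norm_of_nonneg (hF_nonneg n t ht)).le)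
    (ae_of_all _ fun t ht => (h_lim t ht).summable) ?_ (ae_of_all _ h_lim)
  exact hf.congr fun t ht => (h_lim t ht).tsum_eq.symm

lemma hasSum_choose_two_mul_pow_mul_one_sub_pow {t : ℝ} (ht₀ : t ≠ 0) (ht : t ^ 4 < 2) :
    HasSum (fun n : ℕ => ((n + 2).choose 2 : ℝ) * (t ^ 12 * (1 - t ^ 4) ^ (2 * n + 1)))
      ((1 - t ^ 4) / (2 - t ^ 4) ^ 3) := by
  have h4 : 0 < t ^ 4 := by positivity
  have hr : ‖(1 - t ^ 4) ^ 2‖ < 1 := by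
    rw [norm_pow, Real.norm_eq_abs, sq_abs]
    nlinarith
  have h := (hasSum_choose_mul_geometric_of_norm_lt_one 2 hr).mul_left (t ^ 12 * (1 - t ^ 4))
  have hterm : (fun n : ℕ => ((n + 2).choose 2 : ℝ) * (t ^ 12 * (1 - t ^ 4) ^ (2 * n + 1))) =
      fun n => t ^ 12 * (1 - t ^ 4) * ((n + 2).choose 2 * ((1 - t ^ 4) ^ 2) ^ n) := by
    ext n
    rw [← pow_mul]
    ring
  have hsum : (1 - t ^ 4) / (2 - t ^ 4) ^ 3 =
      t ^ 12 * (1 - t ^ 4) * (1 / (1 - (1 - t ^ 4) ^ 2) ^ (2 + 1)) := by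
    rw [show 1 - (1 - t ^ 4) ^ 2 = t ^ 4 * (2 - t ^ 4) by ring]
    have h2 : 2 - t ^ 4 ≠ 0 := by linarith
    field_simp
    ring
  rwa [hterm, hsum]

lemma intervalIntegrable_one_sub_pow_four_div :
    IntervalIntegrable (fun u : ℝ => (1 - u ^ 4) / (2 - u ^ 4) ^ 3) volume 0 1 := by
  refine ContinuousOn.intervalIntegrable (ContinuousOn.div (by fun_prop) (by fun_prop) ?_)
  intro u hu
  rw [uIcc_of_le zero_le_one] at hu
  have := pow_le_one₀ hu.1 hu.2 (n := 4)
  exact pow_ne_zero 3 (by linarith)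

lemma hasSum_term3F2 : HasSum (term3F2 1 (3/2) 3 (21/8) (25/8))
    (221 / 4 * ∫ u in (0:ℝ)..1, (1 - u ^ 4) / (2 - u ^ 4) ^ 3) := by
  have hunit : ∀ t ∈ Ι (0:ℝ) 1, 0 < t ∧ t ^ 4 ≤ 1 := fun t ht => by
    rw [uIoc_of_le zero_le_one] at ht
    exact ⟨ht.1, pow_le_one₀ ht.1.le ht.2⟩
  have h := hasSum_intervalIntegral_of_nonneg
    (F := fun (n : ℕ) (t : ℝ) => ((n + 2).choose 2 : ℝ) * (t ^ 12 * (1 - t ^ 4) ^ (2 * n + 1)))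
    (fun n => (by fun_prop : Continuous _).aestronglyMeasurable)
    (fun n t ht => mul_nonneg (Nat.cast_nonneg _)
      (mul_nonneg (by positivity) (pow_nonneg (sub_nonneg.mpr (hunit t ht).2) _)))
    intervalIntegrable_one_sub_pow_four_div
    (fun t ht => hasSum_choose_two_mul_pow_mul_one_sub_pow (hunit t ht).1.ne'
      (by linarith [(hunit t ht).2]))
  simp only [intervalIntegral.integral_const_mul] at h
  refine (h.mul_left (221 / 4)).congr_fun fun n => ?_
  simp only [term3F2_eq_betaPowIntegral, betaPowIntegral]
  ring

lemma hasDerivAt_arctan_div_add_log_sub_log {a u : ℝ} (hu : |u| < a) :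
    HasDerivAt (fun v => arctan (v / a) + (log (a + v) - log (a - v)) / 2)
      (2 * a ^ 3 / (a ^ 4 - u ^ 4)) u := by
  obtain ⟨hu₁, hu₂⟩ := abs_lt.mp hu
  have hplus : HasDerivAt (fun v => log (a + v)) (1 / (a + u)) u := by
    simpa using ((hasDerivAt_id u).const_add a).log (by simp only [id]; linarith)
  have hminus : HasDerivAt (fun v => log (a - v)) (-1 / (a - u)) u := by
    simpa using ((hasDerivAt_id u).const_sub a).log (by simp only [id]; linarith)
  have harctan : HasDerivAt (fun v => arctan (v / a)) (1 / (1 + (u / a) ^ 2) * (1 / a)) u := by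
    simpa using ((hasDerivAt_id u).div_const a).arctan
  refine (harctan.add ((hplus.sub hminus).div_const 2)).congr_deriv ?_
  have ha : 0 < a := (abs_nonneg u).trans_lt hu
  have hadd : a + u ≠ 0 := by linarith
  have hsub : a - u ≠ 0 := by linarith
  have hsq : a ^ 2 + u ^ 2 ≠ 0 := by positivity
  rw [show a ^ 4 - u ^ 4 = (a ^ 2 + u ^ 2) * (a + u) * (a - u) by ring]
  field_simp
  ring

noncomputable def quarticPrimitive (a u : ℝ) : ℝ :=
  (5 / 64 * u - 9 / 128 * u ^ 5) / (2 - u ^ 4) ^ 2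
    + 27 * a / 512 * (arctan (u / a) + (log (a + u) - log (a - u)) / 2)

lemma hasDerivAt_quarticPrimitive {a u : ℝ} (ha₄ : a ^ 4 = 2) (hu : |u| < a) :
    HasDerivAt (quarticPrimitive a) ((1 - u ^ 4) / (2 - u ^ 4) ^ 3) u := by
  have hden : 2 - u ^ 4 ≠ 0 := by
    have := pow_lt_pow_left₀ hu (abs_nonneg u) four_ne_zero
    rw [pow_abs, abs_of_nonneg (by positivity)] at this
    linarith
  have hnum : HasDerivAt (fun v : ℝ => 5 / 64 * v - 9 / 128 * v ^ 5) (5 / 64 - 45 / 128 * u ^ 4) u := by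
    refine (((hasDerivAt_id u).const_mul (5 / 64 : ℝ)).sub
      ((hasDerivAt_pow 5 u).const_mul (9 / 128 : ℝ))).congr_deriv ?_
    norm_num
    ring
  have hsq : HasDerivAt (fun v : ℝ => (2 - v ^ 4) ^ 2) (-8 * u ^ 3 * (2 - u ^ 4)) u := by
    refine (((hasDerivAt_pow 4 u).const_sub 2).fun_pow 2).congr_deriv ?_
    norm_num
    ring
  have h := (hnum.div hsq (pow_ne_zero 2 hden)).add
    ((hasDerivAt_arctan_div_add_log_sub_log hu).const_mul (27 * a / 512))
  refine h.congr_deriv ?_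
  have hlogs : 27 * a / 512 * (2 * a ^ 3 / (a ^ 4 - u ^ 4)) = 27 / 128 / (2 - u ^ 4) := by
    rw [show 27 * a / 512 * (2 * a ^ 3 / (a ^ 4 - u ^ 4)) = 27 * a ^ 4 / 256 / (a ^ 4 - u ^ 4) by ring,
      ha₄]
    ring
  rw [hlogs]
  field_simp
  ring

lemma integral_one_sub_pow_four_div {a : ℝ} (ha : 1 < a) (ha₄ : a ^ 4 = 2) :
    ∫ u in (0:ℝ)..1, (1 - u ^ 4) / (2 - u ^ 4) ^ 3
      = 1 / 128 + 27 * a / 512 * (π / 2 - arctan a + arcoth a) := by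
  have hderiv : ∀ u ∈ [[(0:ℝ), 1]], HasDerivAt (quarticPrimitive a) ((1 - u ^ 4) / (2 - u ^ 4) ^ 3) u := by
    intro u hu
    rw [uIcc_of_le zero_le_one] at hu
    exact hasDerivAt_quarticPrimitive ha₄ (by rw [abs_of_nonneg hu.1]; linarith [hu.2])
  have hvalue₀ : quarticPrimitive a 0 = 0 := by simp [quarticPrimitive]
  have hvalue₁ : quarticPrimitive a 1 = 1 / 128 + 27 * a / 512 * (π / 2 - arctan a + arcoth a) := by
    rw [quarticPrimitive, one_div a, arctan_inv_of_pos (by linarith), arcoth,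
      log_div (by linarith) (by linarith)]
    ring
  rw [integral_eq_sub_of_hasDerivAt hderiv intervalIntegrable_one_sub_pow_four_div, hvalue₁,
    hvalue₀, sub_zero]

theorem stmt_16 :
    ∑' n : ℕ, (poch (1) n * poch (3/2) n * poch (3) n) / (poch (21/8) n * poch (25/8) n * (Nat.factorial n : ℝ)) * (1 : ℝ) ^ n
      = 221/4096 * (8 + 27 * (2:ℝ) ^ ((1:ℝ)/4) * Real.pi
          + 54 * (2:ℝ) ^ ((1:ℝ)/4) * arcoth ((2:ℝ) ^ ((1:ℝ)/4))
          - 54 * (2:ℝ) ^ ((1:ℝ)/4) * Real.arctan ((2:ℝ) ^ ((1:ℝ)/4))) := by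
  have ha : 1 < (2:ℝ) ^ ((1:ℝ)/4) := one_lt_rpow one_lt_two (by norm_num)
  have ha₄ : ((2:ℝ) ^ ((1:ℝ)/4)) ^ 4 = 2 := by
    rw [← rpow_natCast, ← rpow_mul zero_le_two]
    norm_num
  simp only [one_pow, mul_one]
  change ∑' n, term3F2 1 (3/2) 3 (21/8) (25/8) n = _
  rw [hasSum_term3F2.tsum_eq, integral_one_sub_pow_four_div ha ha₄]
  ring
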